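/- arXiv:1912.10324 — 6 statements merged into one kernel-verified Lean document; each statement's English description precedes it below -/
import Mathlib

section
/- Let n, k, r be integers with r ≥ 2, k ≥ 1 and 2k ≤ n, and let 𝒲 = {W ∈ 𝒮_{n,k,r} : (1,1) ∈ W}. Then for every intersecting family 𝒜 ⊆ 𝒮_{n,k,r} there exists an injection from 𝒜 into 𝒲; in particular |𝒜| ≤ |𝒲| = r^(k−1) · C(n−1, k−1). -/
open Finset

/-- The family of `r`-signed `k`-sets on `[n] = {1, …, n}`. -/
def signedSets (n k r : ℕ) : Finset (Finset (ℕ × ℕ)) :=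
  ((Finset.Icc 1 n ×ˢ Finset.Icc 1 r).powerset).filter
    (fun A => A.card = k ∧ (A.image Prod.fst).card = k)

/-- The star `𝒲` of all `r`-signed `k`-sets on `[n]` containing the pair `(1, 1)`. -/
def signedStar (n k r : ℕ) : Finset (Finset (ℕ × ℕ)) :=
  (signedSets n k r).filter (fun W => (1, 1) ∈ W)

/-!
The supports (underlying `k`-sets) of an intersecting family of signed sets form an intersecting
`k`-uniform family on `[n]`, so by Erdős–Ko–Rado there are at most `C(n-1, k-1)` of them. Within
the fibre over one support `S`, read the signs as functions `S → ZMod r`: two members whose signs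
differ by a constant would be disjoint unless the constant is `0`, so subtracting the sign at a
fixed point of `S` is injective on the fibre, which therefore has at most `r^(k-1)` members. The
star `𝒲` has exactly `r^(k-1) C(n-1, k-1)` members, and the injection comes from comparing
cardinalities.
-/

namespace SignedSet

theorem card_le_of_forall_exists_eq {ι G : Type*} [Fintype ι] [DecidableEq ι] [AddGroup G]
    [Fintype G] (𝓕 : Finset (ι → G)) (h𝓕 : ∀ f ∈ 𝓕, ∀ g ∈ 𝓕, ∃ i, f i = g i) :
    #𝓕 ≤ Fintype.card G ^ (Fintype.card ι - 1) := by
  obtain rfl | ⟨f₀, hf₀⟩ := 𝓕.eq_empty_or_nonempty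
  · simp
  obtain ⟨i₀, -⟩ := h𝓕 f₀ hf₀ f₀ hf₀
  calc #𝓕 ≤ #(univ : Finset ({i // i ≠ i₀} → G)) := by
        refine card_le_card_of_injOn (fun f i => f i - f i₀) (fun _ _ => mem_coe.2 (mem_univ _)) ?_
        intro f hf g hg hfg
        have hdiff : ∀ i, f i - f i₀ = g i - g i₀ := fun i => by
          by_cases hi : i = i₀
          · simp [hi]
          · exact congrFun hfg ⟨i, hi⟩
        obtain ⟨i, hi⟩ := h𝓕 f hf g hg
        have h₀ : f i₀ = g i₀ := by simpa [hi] using hdiff i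
        funext j
        simpa [h₀] using hdiff j
    _ = Fintype.card G ^ (Fintype.card ι - 1) := by simp [Fintype.card_subtype_compl]

theorem erdos_ko_rado_fintype {ι : Type*} [Fintype ι] [DecidableEq ι] {𝒜 : Finset (Finset ι)}
    {k : ℕ} (h𝒜 : (𝒜 : Set (Finset ι)).Intersecting) (h𝒜k : (𝒜 : Set (Finset ι)).Sized k)
    (hk : 2 * k ≤ Fintype.card ι) :
    #𝒜 ≤ (Fintype.card ι - 1).choose (k - 1) := by
  set e := (Fintype.equivFin ι).toEmbedding
  have := erdos_ko_rado (𝒜 := 𝒜.map (mapEmbedding e).toEmbedding) (r := k) ?_ ?_ (by omega)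
  · simpa using this
  · simp only [coe_map, Set.Intersecting, Set.forall_mem_image]
    intro s hs t ht
    simpa [disjoint_map] using h𝒜 hs ht
  · simp only [coe_map, Set.Sized, Set.forall_mem_image]
    intro s hs
    simpa using h𝒜k hs

variable {α β : Type*} [DecidableEq α]

theorem erdos_ko_rado_of_subset {D : Finset α} {ℬ : Finset (Finset α)} {k : ℕ}
    (hℬ : (ℬ : Set (Finset α)).Intersecting) (hℬD : ℬ ⊆ D.powersetCard k) (hk : 2 * k ≤ #D) :
    #ℬ ≤ (#D - 1).choose (k - 1) := by
  have hsub : ∀ S ∈ ℬ, ∀ x ∈ S, x ∈ D := fun S hS => (mem_powersetCard.1 (hℬD hS)).1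
  have hinj : Set.InjOn (Finset.subtype (· ∈ D)) ℬ := fun S hS T hT hST => by
    rw [← subtype_map_of_mem (hsub S hS), ← subtype_map_of_mem (hsub T hT), hST]
  rw [← card_image_of_injOn hinj, ← Fintype.card_coe D]
  apply erdos_ko_rado_fintype _ _ (by simpa using hk)
  · simp only [coe_image, Set.Intersecting, Set.forall_mem_image]
    intro S hS T hT
    obtain ⟨x, hx⟩ := not_disjoint_iff_nonempty_inter.1 (hℬ hS hT)
    rw [mem_inter] at hx
    exact not_disjoint_iff.2 ⟨⟨x, hsub S hS x hx.1⟩, mem_subtype.2 hx.1, mem_subtype.2 hx.2⟩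
  · simp only [coe_image, Set.Sized, Set.forall_mem_image]
    intro S hS
    rw [card_subtype, filter_true_of_mem (hsub S hS)]
    exact (mem_powersetCard.1 (hℬD hS)).2

def signedSetsOn (D : Finset α) (R : Finset β) (m : ℕ) : Finset (Finset (α × β)) :=
  (D ×ˢ R).powerset.filter fun A => #A = m ∧ #(A.image Prod.fst) = m

theorem signedSets_eq (n k r : ℕ) : signedSets n k r = signedSetsOn (Icc 1 n) (Icc 1 r) k := rfl

theorem mem_signedSetsOn {D : Finset α} {R : Finset β} {m : ℕ} {A : Finset (α × β)} :
    A ∈ signedSetsOn D R m ↔ A ⊆ D ×ˢ R ∧ #A = m ∧ Set.InjOn Prod.fst (A : Set (α × β)) := by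
  simp only [signedSetsOn, mem_filter, mem_powerset, ← card_image_iff]
  constructor
  · rintro ⟨hA, hm, him⟩
    exact ⟨hA, hm, him.trans hm.symm⟩
  · rintro ⟨hA, hm, him⟩
    exact ⟨hA, hm, him.trans hm⟩

theorem image_fst_mem_powersetCard {D : Finset α} {R : Finset β} {m : ℕ} {A : Finset (α × β)}
    (hA : A ∈ signedSetsOn D R m) : A.image Prod.fst ∈ D.powersetCard m := by
  obtain ⟨hAD, hm, hinj⟩ := mem_signedSetsOn.1 hA
  refine mem_powersetCard.2 ⟨?_, by rw [card_image_of_injOn hinj, hm]⟩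
  simp only [subset_iff, mem_image]
  rintro _ ⟨p, hp, rfl⟩
  exact (mem_product.1 (hAD hp)).1

variable [DecidableEq β]

def graphOn (S : Finset α) (f : S → β) : Finset (α × β) :=
  S.attach.image fun x => (x.1, f x)

theorem mem_graphOn {S : Finset α} {f : S → β} {p : α × β} :
    p ∈ graphOn S f ↔ ∃ x : S, (x.1, f x) = p := by
  simp [graphOn]

theorem graphOn_injective (S : Finset α) : Function.Injective (graphOn (β := β) S) := by
  intro f g hfg
  funext x
  obtain ⟨y, hy⟩ := mem_graphOn.1 (hfg ▸ mem_graphOn.2 ⟨x, rfl⟩ : (x.1, f x) ∈ graphOn S g)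
  obtain rfl : y = x := Subtype.ext (congrArg Prod.fst hy)
  exact (congrArg Prod.snd hy).symm

theorem card_graphOn (S : Finset α) (f : S → β) : #(graphOn S f) = #S := by
  rw [graphOn, card_image_of_injective _ fun x y h => Subtype.ext (congrArg Prod.fst h),
    card_attach]

theorem graphOn_mem_signedSetsOn {D S : Finset α} {R : Finset β} (hS : S ⊆ D) {f : S → β}
    (hf : ∀ x, f x ∈ R) : graphOn S f ∈ signedSetsOn D R #S := by
  refine mem_signedSetsOn.2 ⟨fun p hp => ?_, card_graphOn S f, ?_⟩
  · obtain ⟨x, rfl⟩ := mem_graphOn.1 hp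
    exact mem_product.2 ⟨hS x.2, hf x⟩
  · intro p hp q hq hpq
    obtain ⟨x, rfl⟩ := mem_graphOn.1 hp
    obtain ⟨y, rfl⟩ := mem_graphOn.1 hq
    obtain rfl : x = y := Subtype.ext hpq
    rfl

theorem image_fst_graphOn (S : Finset α) (f : S → β) : (graphOn S f).image Prod.fst = S := by
  ext x
  simp [graphOn]

theorem exists_graphOn_eq {D : Finset α} {R : Finset β} {m : ℕ} {A : Finset (α × β)}
    (hA : A ∈ signedSetsOn D R m) :
    ∃ f ∈ Fintype.piFinset fun _ : A.image Prod.fst => R, graphOn _ f = A := by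
  obtain ⟨hAD, hm, hinj⟩ := mem_signedSetsOn.1 hA
  have hx : ∀ x : A.image Prod.fst, ∃ b, (x.1, b) ∈ A := fun x => by
    obtain ⟨p, hp, hpx⟩ := mem_image.1 x.2
    exact ⟨p.2, hpx ▸ hp⟩
  choose f hf using hx
  refine ⟨f, Fintype.mem_piFinset.2 fun x => (mem_product.1 (hAD (hf x))).2, ?_⟩
  refine eq_of_subset_of_card_le (fun p hp => ?_) ?_
  · obtain ⟨x, rfl⟩ := mem_graphOn.1 hp
    exact hf x
  · rw [card_graphOn, card_image_of_injOn hinj]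

theorem filter_image_fst_eq {D S : Finset α} {R : Finset β} {m : ℕ} (hS : S ∈ D.powersetCard m) :
    (signedSetsOn D R m).filter (·.image Prod.fst = S) =
      (Fintype.piFinset fun _ : S => R).image (graphOn S) := by
  ext A
  simp only [mem_filter, mem_image, Fintype.mem_piFinset]
  constructor
  · rintro ⟨hA, rfl⟩
    obtain ⟨f, hf, hfA⟩ := exists_graphOn_eq hA
    exact ⟨f, Fintype.mem_piFinset.1 hf, hfA⟩
  · rintro ⟨f, hf, rfl⟩
    obtain ⟨hSD, rfl⟩ := mem_powersetCard.1 hS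
    exact ⟨graphOn_mem_signedSetsOn hSD hf, image_fst_graphOn S f⟩

theorem card_filter_image_fst_eq {D S : Finset α} {R : Finset β} {m : ℕ}
    (hS : S ∈ D.powersetCard m) :
    #((signedSetsOn D R m).filter (·.image Prod.fst = S)) = #R ^ m := by
  rw [filter_image_fst_eq hS, card_image_of_injective _ (graphOn_injective S),
    Fintype.card_piFinset, prod_const, card_univ, Fintype.card_coe, (mem_powersetCard.1 hS).2]

theorem card_signedSetsOn (D : Finset α) (R : Finset β) (m : ℕ) :
    #(signedSetsOn D R m) = (#D).choose m * #R ^ m := by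
  rw [card_eq_sum_card_fiberwise fun _ hA => image_fst_mem_powersetCard hA,
    sum_congr rfl fun _ hS => card_filter_image_fst_eq hS, sum_const, card_powersetCard,
    smul_eq_mul]

theorem card_filter_mem_signedSetsOn {D : Finset α} {R : Finset β} {m : ℕ} {a : α} {b : β}
    (ha : a ∈ D) (hb : b ∈ R) :
    #((signedSetsOn D R (m + 1)).filter ((a, b) ∈ ·)) = #(signedSetsOn (D.erase a) R m) := by
  have hfst : ∀ {B : Finset (α × β)}, B ∈ signedSetsOn (D.erase a) R m → ∀ p ∈ B, p.1 ≠ a :=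
    fun hB p hp => (mem_erase.1 (mem_product.1 ((mem_signedSetsOn.1 hB).1 hp)).1).1
  refine card_nbij' (·.erase (a, b)) (insert (a, b)) (fun A hA => ?_) (fun B hB => ?_)
    (fun A hA => insert_erase (mem_filter.1 hA).2)
    (fun B hB => erase_insert fun h => hfst hB _ h rfl)
  · obtain ⟨hA, hab⟩ := mem_filter.1 hA
    obtain ⟨hAD, hm, hinj⟩ := mem_signedSetsOn.1 hA
    have hcard : #(A.erase (a, b)) = m := by rw [card_erase_of_mem hab, hm, Nat.add_sub_cancel]
    refine mem_signedSetsOn.2 ⟨fun p hp => ?_, hcard, hinj.mono (coe_subset.2 (erase_subset _ _))⟩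
    obtain ⟨hpab, hpA⟩ := mem_erase.1 hp
    obtain ⟨hpD, hpR⟩ := mem_product.1 (hAD hpA)
    exact mem_product.2 ⟨mem_erase.2 ⟨fun h => hpab (hinj hpA hab h), hpD⟩, hpR⟩
  · obtain ⟨hBD, hm, hinj⟩ := mem_signedSetsOn.1 (mem_coe.1 hB)
    have habB : (a, b) ∉ B := fun h => hfst hB _ h rfl
    refine mem_filter.2 ⟨mem_signedSetsOn.2 ⟨insert_subset (mem_product.2 ⟨ha, hb⟩)
      (hBD.trans (product_subset_product_left (erase_subset a D))),
      by rw [card_insert_of_notMem habB, hm], ?_⟩, mem_insert_self _ _⟩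
    rw [coe_insert, Set.injOn_insert (mt mem_coe.1 habB)]
    exact ⟨hinj, fun ⟨p, hp, hpa⟩ => hfst hB p hp hpa⟩

theorem natCast_injOn_Icc (r : ℕ) : Set.InjOn (Nat.cast : ℕ → ZMod r) (Icc 1 r) := by
  intro a ha b hb hab
  simp only [coe_Icc, Set.mem_Icc] at ha hb
  exact ((ZMod.natCast_eq_natCast_iff a b r).1 hab).eq_of_abs_lt (by rw [abs_lt]; omega)

theorem card_filter_image_fst_le_of_intersecting {D S : Finset α} {r m : ℕ} [NeZero r]
    {𝒜 : Finset (Finset (α × ℕ))} (h𝒜 : 𝒜 ⊆ signedSetsOn D (Icc 1 r) m)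
    (hint : ∀ A ∈ 𝒜, ∀ B ∈ 𝒜, (A ∩ B).Nonempty) (hS : S ∈ D.powersetCard m) :
    #(𝒜.filter (·.image Prod.fst = S)) ≤ r ^ (m - 1) := by
  set 𝓕 := (Fintype.piFinset fun _ : S => Icc 1 r).filter (graphOn S · ∈ 𝒜)
  have hfiber : 𝒜.filter (·.image Prod.fst = S) ⊆ 𝓕.image (graphOn S) := by
    intro A hA
    obtain ⟨hA𝒜, hAS⟩ := mem_filter.1 hA
    have hA' : A ∈ (Fintype.piFinset fun _ : S => Icc 1 r).image (graphOn S) := by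
      rw [← filter_image_fst_eq hS]
      exact mem_filter.2 ⟨h𝒜 hA𝒜, hAS⟩
    obtain ⟨f, hf, rfl⟩ := mem_image.1 hA'
    exact mem_image_of_mem _ (mem_filter.2 ⟨hf, hA𝒜⟩)
  have hcast : Set.InjOn (fun f x => (f x : ZMod r)) (𝓕 : Set (S → ℕ)) := by
    intro f hf g hg hfg
    have hf := Fintype.mem_piFinset.1 (mem_filter.1 hf).1
    have hg := Fintype.mem_piFinset.1 (mem_filter.1 hg).1
    funext x
    exact natCast_injOn_Icc r (hf x) (hg x) (congrFun hfg x)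
  have hagree : ∀ f ∈ 𝓕.image (fun f x => (f x : ZMod r)),
      ∀ g ∈ 𝓕.image (fun f x => (f x : ZMod r)), ∃ x, f x = g x := by
    simp only [forall_mem_image]
    intro f hf g hg
    obtain ⟨p, hp⟩ := hint _ (mem_filter.1 hf).2 _ (mem_filter.1 hg).2
    obtain ⟨⟨x, hxp⟩, ⟨y, hyp⟩⟩ := And.imp mem_graphOn.1 mem_graphOn.1 (mem_inter.1 hp)
    obtain rfl : x = y := Subtype.ext (congrArg Prod.fst (hxp.trans hyp.symm))
    exact ⟨x, congrArg _ (congrArg Prod.snd (hxp.trans hyp.symm))⟩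
  calc #(𝒜.filter (·.image Prod.fst = S)) ≤ #𝓕 := (card_le_card hfiber).trans card_image_le
    _ = #(𝓕.image fun f x => (f x : ZMod r)) := (card_image_of_injOn hcast).symm
    _ ≤ Fintype.card (ZMod r) ^ (Fintype.card S - 1) := card_le_of_forall_exists_eq _ hagree
    _ = r ^ (m - 1) := by rw [ZMod.card, Fintype.card_coe, (mem_powersetCard.1 hS).2]

theorem card_le_of_intersecting {D : Finset α} {r m : ℕ} [NeZero r] (hm : 2 * m ≤ #D)
    {𝒜 : Finset (Finset (α × ℕ))} (h𝒜 : 𝒜 ⊆ signedSetsOn D (Icc 1 r) m)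
    (hint : ∀ A ∈ 𝒜, ∀ B ∈ 𝒜, (A ∩ B).Nonempty) :
    #𝒜 ≤ r ^ (m - 1) * (#D - 1).choose (m - 1) := by
  set ℬ := 𝒜.image (·.image Prod.fst)
  have hℬD : ℬ ⊆ D.powersetCard m := by
    simp only [ℬ, image_subset_iff]
    exact fun A hA => image_fst_mem_powersetCard (h𝒜 hA)
  have hℬ : (ℬ : Set (Finset α)).Intersecting := by
    simp only [ℬ, coe_image, Set.Intersecting, Set.forall_mem_image]
    intro A hA B hB
    obtain ⟨p, hp⟩ := hint A hA B hB
    obtain ⟨hpA, hpB⟩ := mem_inter.1 hp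
    exact not_disjoint_iff.2 ⟨p.1, mem_image_of_mem _ hpA, mem_image_of_mem _ hpB⟩
  calc #𝒜 = ∑ S ∈ ℬ, #(𝒜.filter (·.image Prod.fst = S)) := card_eq_sum_card_image _ _
    _ ≤ ∑ _S ∈ ℬ, r ^ (m - 1) :=
        sum_le_sum fun S hS => card_filter_image_fst_le_of_intersecting h𝒜 hint (hℬD hS)
    _ = r ^ (m - 1) * #ℬ := by rw [sum_const, smul_eq_mul, mul_comm]
    _ ≤ r ^ (m - 1) * (#D - 1).choose (m - 1) :=
        Nat.mul_le_mul_left _ (erdos_ko_rado_of_subset hℬ hℬD hm)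

theorem card_signedStar {n k r : ℕ} (hn : 1 ≤ n) (hk : 1 ≤ k) (hr : 1 ≤ r) :
    #(signedStar n k r) = r ^ (k - 1) * (n - 1).choose (k - 1) := by
  obtain ⟨m, rfl⟩ : ∃ m, k = m + 1 := ⟨k - 1, by omega⟩
  rw [signedStar, signedSets_eq, card_filter_mem_signedSetsOn (by simpa using hn)
    (by simpa using hr), card_signedSetsOn, card_erase_of_mem (by simpa using hn), Nat.card_Icc,
    Nat.card_Icc, Nat.add_sub_cancel, Nat.add_sub_cancel, Nat.add_sub_cancel, mul_comm]

end SignedSet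

theorem signed_EKR_injective (n k r : ℕ) (hr : 2 ≤ r) (hk : 1 ≤ k) (hkn : 2 * k ≤ n)
    (𝒜 : Finset (Finset (ℕ × ℕ))) (h𝒜 : 𝒜 ⊆ signedSets n k r)
    (hint : ∀ A ∈ 𝒜, ∀ B ∈ 𝒜, (A ∩ B).Nonempty) :
    (∃ f : Finset (ℕ × ℕ) → Finset (ℕ × ℕ),
      Set.InjOn f 𝒜 ∧ ∀ A ∈ 𝒜, f A ∈ signedStar n k r) ∧
    𝒜.card ≤ (signedStar n k r).card ∧
    (signedStar n k r).card = r ^ (k - 1) * Nat.choose (n - 1) (k - 1) := by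
  have : NeZero r := ⟨by omega⟩
  have hstar : #(signedStar n k r) = r ^ (k - 1) * (n - 1).choose (k - 1) :=
    SignedSet.card_signedStar (by omega) hk (by omega)
  have hle : #𝒜 ≤ #(signedStar n k r) := by
    simpa [hstar] using SignedSet.card_le_of_intersecting (by simpa using hkn) h𝒜 hint
  obtain ⟨f, hmaps, hinj⟩ := (𝒜 : Set (Finset (ℕ × ℕ))).toFinite.exists_injOn_of_encard_le
    (t := (signedStar n k r : Set (Finset (ℕ × ℕ)))) (by simpa using hle)
  exact ⟨⟨f, hinj, fun A hA => hmaps hA⟩, hle, hstar⟩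
end

section
/- (Erdős–Ko–Rado Theorem) Let n, k ≥ 0 be integers with n ≥ 2k. If ℱ is an intersecting family of k-element subsets of [n], then |ℱ| ≤ C(n−1, k−1). -/
/-! Mathlib proves the bound for families on `Fin n` (via Kruskal–Katona); relabelling the ground
set as `Fin n` along an embedding preserves sizes, intersections and cardinalities, so the bound
transfers to `[n]`. -/

open Finset

namespace Finset

variable {α β : Type*} [DecidableEq α] [DecidableEq β]

theorem intersecting_map_mapEmbedding_iff (e : α ↪ β) {𝒜 : Finset (Finset α)} :
    (↑(𝒜.map (mapEmbedding e).toEmbedding) : Set (Finset β)).Intersecting ↔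
      (𝒜 : Set (Finset α)).Intersecting := by
  simp only [Set.Intersecting, coe_map, Set.forall_mem_image, RelEmbedding.coe_toEmbedding,
    mapEmbedding_apply, disjoint_map]

theorem card_le_of_intersecting_of_subset_powersetCard {s : Finset α} {k : ℕ}
    {ℱ : Finset (Finset α)} (hℱ : ℱ ⊆ s.powersetCard k)
    (hint : (ℱ : Set (Finset α)).Intersecting) (hk : 2 * k ≤ #s) :
    #ℱ ≤ (#s - 1).choose (k - 1) := by
  let e : Fin #s ↪ α := s.equivFin.symm.toEmbedding.trans (Function.Embedding.subtype _)
  have hs : univ.map e = s := by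
    rw [← map_map, univ_map_equiv_to_embedding, ← attach_eq_univ, attach_map_val]
  rw [← hs, powersetCard_map] at hℱ
  obtain ⟨𝒜, h𝒜, rfl⟩ := subset_map_iff.1 hℱ
  rw [intersecting_map_mapEmbedding_iff] at hint
  rw [card_map]
  exact erdos_ko_rado hint (fun A hA => (mem_powersetCard.1 (h𝒜 hA)).2)
    (Nat.le_div_iff_mul_le two_pos |>.2 (by omega))

end Finset

/-- Erdős–Ko–Rado Theorem. -/
theorem erdos_ko_rado (n k : ℕ) (hnk : 2 * k ≤ n)
    (ℱ : Finset (Finset ℕ)) (hℱ : ℱ ⊆ (Finset.Icc 1 n).powersetCard k)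
    (hint : ∀ F ∈ ℱ, ∀ F' ∈ ℱ, (F ∩ F').Nonempty) :
    ℱ.card ≤ Nat.choose (n - 1) (k - 1) := by
  have hcard : #(Icc 1 n) = n := by simp
  have := card_le_of_intersecting_of_subset_powersetCard hℱ
    (fun F hF F' hF' => not_disjoint_iff_nonempty_inter.2 (hint F hF F' hF')) (by rwa [hcard])
  rwa [hcard] at this
end

section
/- (Katona's Intersection Shadow Theorem) Let n, s, t be integers with 0 ≤ t ≤ s ≤ n. If ℱ is a family of s-element subsets of [n] such that |F ∩ F′| ≥ t for all F, F′ ∈ ℱ, then |∂_{s−t}(ℱ)| ≥ |ℱ|. -/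
/-!
For an `s`-uniform family the `(s - t)`-shadow is the `t`-fold shadow `∂^[t]`, and
`#𝒜 ≤ #∂^[t] 𝒜` holds for `s`-uniform `t`-intersecting families `𝒜` on any finite ground set `g`.

If `#g + t ≤ 2s`, the iterated local LYM inequality gives
`#𝒜 / C(#g, s) ≤ #∂^[t] 𝒜 / C(#g, s - t)`, and `C(#g, s) ≤ C(#g, s - t)` by unimodality, since
`#g - s ≤ s - t ≤ s`.

Otherwise fix `a ∈ g`. The compressions replacing `a` by another `i ∈ g` preserve the size of the
family and `t`-intersection, do not enlarge shadows, and lower the number of members containing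
`a`, so we may assume the family is compressed. Then the members avoiding `a`, and the members
containing `a` with `a` removed, are `t`-intersecting families on `g.erase a`: two sets of the
second kind miss a common `i ≠ a` because `#g > 2s - t`, and moving `a` to `i` in one of them stays
inside the family without changing the intersection. Their `t`-fold shadows (the second one with
`a` added back) lie disjointly in that of the family, and induction on `g` concludes.
-/

open Finset

/-- The `m`-shadow of a family `𝒩`: all `m`-element sets contained in some member of `𝒩`. -/
def mShadow (m : ℕ) (𝒩 : Finset (Finset ℕ)) : Finset (Finset ℕ) :=
  𝒩.sup (fun F => F.powersetCard m)

open scoped FinsetFamily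
open UV

theorem Nat.choose_le_choose_of_le_of_le_half {n a c : ℕ} (hac : a ≤ c) (hc : c ≤ n / 2) :
    n.choose a ≤ n.choose c := by
  induction c, hac using Nat.le_induction with
  | base => rfl
  | succ c _ ih => exact (ih (by omega)).trans (Nat.choose_le_succ_of_lt_half_left (by omega))

theorem Nat.choose_le_choose_of_le_of_le_sub {n a c : ℕ} (hac : a ≤ c) (hc : c ≤ n - a) :
    n.choose a ≤ n.choose c := by
  obtain hc2 | hc2 := le_or_gt c (n / 2)
  · exact choose_le_choose_of_le_of_le_half hac hc2
  · rw [← Nat.choose_symm (by omega : c ≤ n)]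
    exact choose_le_choose_of_le_of_le_half (by omega) (by omega)

variable {α : Type*} [DecidableEq α]

def IsTIntersecting (t : ℕ) (𝒜 : Finset (Finset α)) : Prop :=
  ∀ A ∈ 𝒜, ∀ B ∈ 𝒜, t ≤ #(A ∩ B)

theorem IsTIntersecting.mono {t : ℕ} {𝒜 ℬ : Finset (Finset α)} (h : IsTIntersecting t 𝒜)
    (hℬ : ℬ ⊆ 𝒜) : IsTIntersecting t ℬ :=
  fun A hA B hB => h A (hℬ hA) B (hℬ hB)

theorem IsTIntersecting.le_card {t : ℕ} {𝒜 : Finset (Finset α)} {A : Finset α}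
    (h : IsTIntersecting t 𝒜) (hA : A ∈ 𝒜) : t ≤ #A := by
  simpa using h A hA A hA

section LYM

variable {g : Finset α} {𝒜 : Finset (Finset α)} {r : ℕ}

theorem shadow_subset_powersetCard (h𝒜 : 𝒜 ⊆ g.powersetCard r) : ∂ 𝒜 ⊆ g.powersetCard (r - 1) := by
  intro B hB
  obtain ⟨A, hA, hBA, hcard⟩ := mem_shadow_iff_exists_mem_card_add_one.1 hB
  obtain ⟨hAg, rfl⟩ := mem_powersetCard.1 (h𝒜 hA)
  exact mem_powersetCard.2 ⟨hBA.trans hAg, by omega⟩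

theorem card_mul_le_card_shadow_mul_of_subset_powersetCard (h𝒜 : 𝒜 ⊆ g.powersetCard r) :
    #𝒜 * r ≤ #(∂ 𝒜) * (#g - r + 1) := by
  refine card_mul_le_card_mul' (· ⊆ ·) (fun A hA => ?_) (fun B hB => ?_)
  · rw [← (mem_powersetCard.1 (h𝒜 hA)).2, ← card_image_of_injOn A.erase_injOn]
    refine card_le_card ?_
    simp_rw [image_subset_iff, mem_bipartiteBelow]
    exact fun a ha => ⟨erase_mem_shadow hA ha, erase_subset _ _⟩
  · obtain ⟨A, hA, hBA, hcard⟩ := mem_shadow_iff_exists_mem_card_add_one.1 hB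
    obtain ⟨hAg, rfl⟩ := mem_powersetCard.1 (h𝒜 hA)
    calc #(bipartiteAbove (· ⊆ ·) 𝒜 B) ≤ #((g \ B).image (insert · B)) := by
          refine card_le_card fun A' hA' => ?_
          obtain ⟨hA'𝒜, hBA'⟩ := (mem_bipartiteAbove _).1 hA'
          obtain ⟨hA'g, hA'card⟩ := mem_powersetCard.1 (h𝒜 hA'𝒜)
          obtain ⟨a, ha, rfl⟩ := exists_eq_insert_iff.2 ⟨hBA', by omega⟩
          exact mem_image.2 ⟨a, mem_sdiff.2 ⟨hA'g (mem_insert_self a B), ha⟩, rfl⟩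
      _ ≤ #(g \ B) := card_image_le
      _ ≤ #g - #A + 1 := by rw [card_sdiff_of_subset (hBA.trans hAg)]; omega

theorem card_div_choose_le_card_shadow_div_choose_of_subset_powersetCard (hr : r ≠ 0)
    (h𝒜 : 𝒜 ⊆ g.powersetCard r) :
    (#𝒜 : ℚ) / (#g).choose r ≤ #(∂ 𝒜) / (#g).choose (r - 1) := by
  obtain hgr | hrg := lt_or_ge #g r
  · rw [Nat.choose_eq_zero_of_lt hgr, Nat.cast_zero, div_zero]
    positivity
  have hlym := card_mul_le_card_shadow_mul_of_subset_powersetCard h𝒜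
  obtain ⟨r, rfl⟩ := Nat.exists_eq_succ_of_ne_zero hr
  rw [div_le_div_iff₀ (by exact_mod_cast Nat.choose_pos hrg)
    (by exact_mod_cast Nat.choose_pos (by omega)), Nat.succ_sub_one]
  norm_cast
  refine Nat.le_of_mul_le_mul_right ?_ (Nat.sub_pos_of_lt hrg)
  calc #𝒜 * (#g).choose r * (#g - r) = #𝒜 * (r + 1) * (#g).choose (r + 1) := by
        rw [mul_assoc, ← Nat.choose_succ_right_eq]; ring
    _ ≤ #(∂ 𝒜) * (#g - (r + 1) + 1) * (#g).choose (r + 1) := by gcongr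
    _ = #(∂ 𝒜) * (#g).choose (r + 1) * (#g - r) := by
        rw [show #g - (r + 1) + 1 = #g - r by omega]; ring

theorem card_div_choose_le_card_shadow_iterate_div_choose {k : ℕ} (hkr : k ≤ r)
    (h𝒜 : 𝒜 ⊆ g.powersetCard r) :
    (#𝒜 : ℚ) / (#g).choose r ≤ #(∂^[k] 𝒜) / (#g).choose (r - k) := by
  induction k generalizing r 𝒜 with
  | zero => rfl
  | succ k ih =>
    rw [Function.iterate_succ_apply, Nat.sub_succ', Nat.sub_right_comm]
    exact (card_div_choose_le_card_shadow_div_choose_of_subset_powersetCard (by omega) h𝒜).trans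
      (ih (by omega) (shadow_subset_powersetCard h𝒜))

theorem card_le_card_shadow_iterate_of_card_add_le {s t : ℕ} (h𝒜 : 𝒜 ⊆ g.powersetCard s)
    (hts : t ≤ s) (hg : #g + t ≤ 2 * s) : #𝒜 ≤ #(∂^[t] 𝒜) := by
  obtain hgs | hsg := lt_or_ge #g s
  · simp [subset_empty.1 (h𝒜.trans (powersetCard_eq_empty.2 hgs).le)]
  have hpos : 0 < (#g).choose s := Nat.choose_pos hsg
  have hchoose : (#g).choose s ≤ (#g).choose (s - t) := by
    rw [← Nat.choose_symm hsg]
    exact Nat.choose_le_choose_of_le_of_le_sub (by omega) (by omega)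
  have hlym := card_div_choose_le_card_shadow_iterate_div_choose hts h𝒜
  rw [div_le_div_iff₀ (by positivity) (by exact_mod_cast Nat.choose_pos (by omega))] at hlym
  exact Nat.le_of_mul_le_mul_right
    ((Nat.mul_le_mul_left _ hchoose).trans (by exact_mod_cast hlym)) hpos

end LYM

section Compression

variable {i j : α} {A B : Finset α} {𝒜 : Finset (Finset α)} {t : ℕ}

theorem compress_singleton (hij : i ≠ j) (A : Finset α) :
    compress {i} {j} A = if i ∉ A ∧ j ∈ A then insert i (A.erase j) else A := by
  simp only [compress, disjoint_singleton_left, singleton_subset_iff]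
  split_ifs
  · ext x
    simp only [sup_eq_union, mem_sdiff, mem_union, mem_singleton, mem_insert, mem_erase]
    grind
  · rfl

theorem card_inter_le_card_compress_inter (hij : i ≠ j) (hB : ¬(i ∉ B ∧ j ∈ B)) (A : Finset α) :
    #(A ∩ B) ≤ #(compress {i} {j} A ∩ B) := by
  rw [compress_singleton hij]
  split_ifs with hA
  · by_cases hjB : j ∈ B
    · have hiB : i ∈ B := by tauto
      have : insert i (A.erase j) ∩ B = insert i ((A ∩ B).erase j) := by
        ext x; simp only [mem_inter, mem_insert, mem_erase]; grind
      rw [this, card_insert_of_notMem (by simp [hA.1]),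
        card_erase_of_mem (mem_inter.2 ⟨hA.2, hjB⟩)]
      omega
    · refine card_le_card fun x hx => ?_
      simp only [mem_inter, mem_insert, mem_erase] at hx ⊢
      grind
  · rfl

theorem card_inter_le_card_compress_inter_compress (hij : i ≠ j) (A B : Finset α) :
    #(A ∩ B) ≤ #(compress {i} {j} A ∩ compress {i} {j} B) := by
  by_cases hB : i ∉ B ∧ j ∈ B
  · by_cases hA : i ∉ A ∧ j ∈ A
    · have : compress {i} {j} A ∩ compress {i} {j} B = insert i ((A ∩ B).erase j) := by
        rw [compress_singleton hij, compress_singleton hij, if_pos hA, if_pos hB]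
        ext x; simp only [mem_inter, mem_insert, mem_erase]; grind
      rw [this, card_insert_of_notMem (by simp [hA.1]),
        card_erase_of_mem (mem_inter.2 ⟨hA.2, hB.2⟩)]
      omega
    · rw [inter_comm, inter_comm (compress _ _ A), compress_singleton hij A, if_neg hA]
      exact card_inter_le_card_compress_inter hij hA B
  · rw [compress_singleton hij B, if_neg hB]
    exact card_inter_le_card_compress_inter hij hB A

theorem le_card_compress_inter (hij : i ≠ j) (h₁ : t ≤ #(A ∩ B))
    (h₂ : t ≤ #(A ∩ compress {i} {j} B)) : t ≤ #(compress {i} {j} A ∩ B) := by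
  by_cases hB : i ∉ B ∧ j ∈ B
  · rw [compress_singleton hij] at h₂ ⊢
    rw [if_pos hB] at h₂
    split_ifs with hA
    -- when the compression moves both `A` and `B`, `compress A ∩ B = A ∩ compress B`
    · convert h₂ using 2
      ext x; simp only [mem_inter, mem_insert, mem_erase]; grind
    · exact h₁
  · exact h₁.trans (card_inter_le_card_compress_inter hij hB A)

theorem IsTIntersecting.compression (h : IsTIntersecting t 𝒜) (hij : i ≠ j) :
    IsTIntersecting t (𝓒 {i} {j} 𝒜) := by
  rintro _ hA _ hB
  rw [mem_compression] at hA hB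
  rcases hA with ⟨hA, hCA⟩ | ⟨-, A, hA, rfl⟩ <;> rcases hB with ⟨hB, hCB⟩ | ⟨-, B, hB, rfl⟩
  · exact h _ hA _ hB
  · rw [inter_comm]
    exact le_card_compress_inter hij (h _ hB _ hA) (h _ hB _ hCA)
  · exact le_card_compress_inter hij (h _ hA _ hB) (h _ hA _ hCB)
  · exact (h _ hA _ hB).trans (card_inter_le_card_compress_inter_compress hij A B)

theorem compression_subset_powersetCard {u v g : Finset α} {r : ℕ} (hu : u ⊆ g) (huv : #u = #v)
    (h𝒜 : 𝒜 ⊆ g.powersetCard r) : 𝓒 u v 𝒜 ⊆ g.powersetCard r := by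
  intro A hA
  rcases mem_compression.1 hA with ⟨hA, -⟩ | ⟨-, B, hB, rfl⟩
  · exact h𝒜 hA
  obtain ⟨hBg, hBr⟩ := mem_powersetCard.1 (h𝒜 hB)
  refine mem_powersetCard.2 ⟨?_, by rw [card_compress huv, hBr]⟩
  unfold compress
  split_ifs
  · exact sdiff_subset.trans (union_subset hBg hu)
  · exact hBg

theorem card_shadow_iterate_compression_le (i j : α) (k : ℕ) (𝒜 : Finset (Finset α)) :
    #(∂^[k] (𝓒 {i} {j} 𝒜)) ≤ #(∂^[k] 𝒜) := by
  induction k generalizing 𝒜 with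
  | zero => exact (card_compression _ _ _).le
  | succ k ih =>
    have hsub : ∂ (𝓒 {i} {j} 𝒜) ⊆ 𝓒 {i} {j} (∂ 𝒜) :=
      shadow_compression_subset_compression_shadow _ _ (by simp [isCompressed_self])
    rw [Function.iterate_succ_apply, Function.iterate_succ_apply]
    exact (card_le_card (shadow_monotone.iterate k hsub)).trans (ih _)

theorem card_filter_mem_compression_lt (h : ¬IsCompressed {i} {j} 𝒜) :
    #{A ∈ 𝓒 {i} {j} 𝒜 | j ∈ A} < #{A ∈ 𝒜 | j ∈ A} := by
  have hsub : {A ∈ 𝓒 {i} {j} 𝒜 | j ∈ A} ⊆ {A ∈ 𝒜 | j ∈ A} := fun A hA => by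
    rw [mem_filter] at hA ⊢
    exact ⟨mem_of_mem_compression hA.1 (singleton_subset_iff.2 hA.2) (by simp), hA.2⟩
  obtain ⟨A, hA, hA'⟩ : ∃ A ∈ 𝒜, A ∉ 𝓒 {i} {j} 𝒜 := by
    by_contra! h𝒜
    exact h (eq_of_subset_of_card_le h𝒜 (card_compression _ _ _).le).symm
  have hjA : j ∈ A := by
    by_contra hjA
    refine hA' (mem_compression.2 (Or.inl ⟨hA, ?_⟩))
    rwa [compress, if_neg fun h => hjA (singleton_subset_iff.1 h.2)]
  exact card_lt_card ((ssubset_iff_of_subset hsub).2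
    ⟨A, mem_filter.2 ⟨hA, hjA⟩, fun h => hA' (mem_filter.1 h).1⟩)

end Compression

section Split

variable {a : α} {g : Finset α} {𝒜 : Finset (Finset α)} {s t : ℕ}

theorem card_shadow_iterate_nonMemberSubfamily_add_memberSubfamily_le (a : α) (k : ℕ)
    (𝒜 : Finset (Finset α)) :
    #(∂^[k] (𝒜.nonMemberSubfamily a)) + #(∂^[k] (𝒜.memberSubfamily a)) ≤ #(∂^[k] 𝒜) := by
  have ha : ∀ B ∈ ∂^[k] (𝒜.memberSubfamily a), a ∉ B := fun B hB haB => by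
    obtain ⟨A, hA, hBA, -⟩ := mem_shadow_iterate_iff_exists_sdiff.1 hB
    exact (mem_memberSubfamily.1 hA).2 (hBA haB)
  have hdisj : Disjoint (∂^[k] (𝒜.nonMemberSubfamily a))
      ((∂^[k] (𝒜.memberSubfamily a)).image (insert a)) := by
    rw [disjoint_left]
    rintro _ hB hB'
    obtain ⟨B, -, rfl⟩ := mem_image.1 hB'
    obtain ⟨A, hA, hBA, -⟩ := mem_shadow_iterate_iff_exists_sdiff.1 hB
    exact (mem_nonMemberSubfamily.1 hA).2 (hBA (mem_insert_self a B))
  have hinsert : (∂^[k] (𝒜.memberSubfamily a)).image (insert a) ⊆ ∂^[k] 𝒜 := by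
    intro _ hB'
    obtain ⟨B, hB, rfl⟩ := mem_image.1 hB'
    have haB := ha B hB
    rw [mem_shadow_iterate_iff_exists_mem_card_add] at hB ⊢
    obtain ⟨A, hA, hBA, hcard⟩ := hB
    obtain ⟨hA, haA⟩ := mem_memberSubfamily.1 hA
    refine ⟨insert a A, hA, insert_subset_insert a hBA, ?_⟩
    rw [card_insert_of_notMem haA, card_insert_of_notMem haB, hcard, add_right_comm]
  calc #(∂^[k] (𝒜.nonMemberSubfamily a)) + #(∂^[k] (𝒜.memberSubfamily a))
      = #(∂^[k] (𝒜.nonMemberSubfamily a))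
          + #((∂^[k] (𝒜.memberSubfamily a)).image (insert a)) := by
        rw [card_image_of_injOn fun B hB B' hB' hBB' => by
          rw [← erase_insert (ha B hB), hBB', erase_insert (ha B' hB')]]
    _ = #(∂^[k] (𝒜.nonMemberSubfamily a) ∪ (∂^[k] (𝒜.memberSubfamily a)).image (insert a)) :=
        (card_union_of_disjoint hdisj).symm
    _ ≤ #(∂^[k] 𝒜) :=
        card_le_card (union_subset (shadow_monotone.iterate k (filter_subset _ _)) hinsert)

theorem nonMemberSubfamily_subset_powersetCard (h𝒜 : 𝒜 ⊆ g.powersetCard s) :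
    𝒜.nonMemberSubfamily a ⊆ (g.erase a).powersetCard s := by
  intro A hA
  obtain ⟨hA, haA⟩ := mem_nonMemberSubfamily.1 hA
  obtain ⟨hAg, hAs⟩ := mem_powersetCard.1 (h𝒜 hA)
  exact mem_powersetCard.2 ⟨subset_erase.2 ⟨hAg, haA⟩, hAs⟩

theorem memberSubfamily_subset_powersetCard (h𝒜 : 𝒜 ⊆ g.powersetCard s) :
    𝒜.memberSubfamily a ⊆ (g.erase a).powersetCard (s - 1) := by
  intro A hA
  obtain ⟨hA, haA⟩ := mem_memberSubfamily.1 hA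
  obtain ⟨hAg, hAs⟩ := mem_powersetCard.1 (h𝒜 hA)
  refine mem_powersetCard.2 ⟨subset_erase.2 ⟨(subset_insert a A).trans hAg, haA⟩, ?_⟩
  rw [card_insert_of_notMem haA] at hAs
  omega

theorem IsTIntersecting.memberSubfamily (h : IsTIntersecting t 𝒜) (h𝒜 : 𝒜 ⊆ g.powersetCard s)
    (hcomp : ∀ i ∈ g, i ≠ a → IsCompressed {i} {a} 𝒜) (hg : 2 * s < #g + t) :
    IsTIntersecting t (𝒜.memberSubfamily a) := by
  intro A hA B hB
  obtain ⟨hA, haA⟩ := mem_memberSubfamily.1 hA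
  obtain ⟨hB, haB⟩ := mem_memberSubfamily.1 hB
  have hAs := (mem_powersetCard.1 (h𝒜 hA)).2
  have hBs := (mem_powersetCard.1 (h𝒜 hB)).2
  rw [card_insert_of_notMem haA] at hAs
  rw [card_insert_of_notMem haB] at hBs
  have hAB : t ≤ #(A ∩ B) + 1 := by
    have := h _ hA _ hB
    rwa [← insert_inter_distrib, card_insert_of_notMem (by simp [haA])] at this
  obtain ⟨i, hi, hiAB⟩ : ∃ i ∈ g.erase a, i ∉ A ∪ B := by
    refine exists_mem_notMem_of_card_lt_card ?_
    have := card_union_add_card_inter A B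
    have := pred_card_le_card_erase (s := g) (a := a)
    omega
  obtain ⟨hia, hig⟩ := mem_erase.1 hi
  rw [mem_union, not_or] at hiAB
  have hiA : insert i A ∈ 𝒜 := by
    have := compress_mem_compression (u := {i}) (v := {a}) hA
    rwa [(hcomp i hig hia).eq, compress_singleton hia,
      if_pos ⟨by simp [hia, hiAB.1], mem_insert_self a A⟩, erase_insert haA] at this
  have hinter : insert i A ∩ insert a B = A ∩ B := by
    ext x; simp only [mem_inter, mem_insert]; grind
  simpa [hinter] using h _ hiA _ hB

end Split

theorem IsTIntersecting.card_le_card_shadow_iterate_of_forall_isCompressed {g : Finset α} {a : α}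
    {s t : ℕ}
    (H : ∀ 𝒢 ⊆ g.powersetCard s, IsTIntersecting t 𝒢 →
      (∀ i ∈ g, i ≠ a → IsCompressed {i} {a} 𝒢) → #𝒢 ≤ #(∂^[t] 𝒢))
    {𝒜 : Finset (Finset α)} (h : IsTIntersecting t 𝒜) (h𝒜 : 𝒜 ⊆ g.powersetCard s) :
    #𝒜 ≤ #(∂^[t] 𝒜) := by
  induction hm : #{A ∈ 𝒜 | a ∈ A} using Nat.strong_induction_on generalizing 𝒜 with
  | _ m ih =>
  by_cases hcomp : ∀ i ∈ g, i ≠ a → IsCompressed {i} {a} 𝒜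
  · exact H 𝒜 h𝒜 h hcomp
  push Not at hcomp
  obtain ⟨i, hi, hia, hcomp⟩ := hcomp
  calc #𝒜 = #(𝓒 {i} {a} 𝒜) := (card_compression _ _ _).symm
    _ ≤ #(∂^[t] (𝓒 {i} {a} 𝒜)) :=
        ih _ (hm ▸ card_filter_mem_compression_lt hcomp) (h.compression hia)
          (compression_subset_powersetCard (singleton_subset_iff.2 hi) rfl h𝒜) rfl
    _ ≤ #(∂^[t] 𝒜) := card_shadow_iterate_compression_le _ _ _ _

theorem IsTIntersecting.card_le_card_shadow_iterate {g : Finset α} {s t : ℕ}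
    {𝒜 : Finset (Finset α)} (h : IsTIntersecting t 𝒜) (h𝒜 : 𝒜 ⊆ g.powersetCard s) :
    #𝒜 ≤ #(∂^[t] 𝒜) := by
  induction g using Finset.strongInduction generalizing s 𝒜 with
  | H g ih =>
  obtain rfl | ⟨A, hA⟩ := 𝒜.eq_empty_or_nonempty
  · simp
  have hts : t ≤ s := (h.le_card hA).trans (mem_powersetCard.1 (h𝒜 hA)).2.le
  by_cases hg : #g + t ≤ 2 * s
  · exact card_le_card_shadow_iterate_of_card_add_le h𝒜 hts hg
  obtain ⟨a, ha⟩ : g.Nonempty := card_pos.1 (by omega)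
  refine h.card_le_card_shadow_iterate_of_forall_isCompressed (a := a)
    (fun 𝒢 h𝒢 (hG : IsTIntersecting t 𝒢) hcomp => ?_) h𝒜
  have hg' := erase_ssubset ha
  calc #𝒢 = #(𝒢.nonMemberSubfamily a) + #(𝒢.memberSubfamily a) := by
        rw [add_comm, card_memberSubfamily_add_card_nonMemberSubfamily]
    _ ≤ #(∂^[t] (𝒢.nonMemberSubfamily a)) + #(∂^[t] (𝒢.memberSubfamily a)) :=
        add_le_add
          (ih _ hg' (hG.mono (filter_subset _ _)) (nonMemberSubfamily_subset_powersetCard h𝒢))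
          (ih _ hg' (hG.memberSubfamily h𝒢 hcomp (by omega))
            (memberSubfamily_subset_powersetCard h𝒢))
    _ ≤ #(∂^[t] 𝒢) := card_shadow_iterate_nonMemberSubfamily_add_memberSubfamily_le _ _ _

theorem mShadow_eq_shadow_iterate {s t : ℕ} {𝒜 : Finset (Finset ℕ)} (hts : t ≤ s)
    (h𝒜 : ∀ A ∈ 𝒜, #A = s) : mShadow (s - t) 𝒜 = ∂^[t] 𝒜 := by
  ext A
  simp only [mShadow, mem_sup, mem_powersetCard, mem_shadow_iterate_iff_exists_mem_card_add]
  refine exists_congr fun B => and_congr_right fun hB => and_congr_right fun _ => ?_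
  rw [h𝒜 B hB]
  omega

theorem katona_intersection_shadow_general (n s t : ℕ)
    (ℱ : Finset (Finset ℕ)) (hℱ : ℱ ⊆ (Finset.Icc 1 n).powersetCard s)
    (hint : ∀ F ∈ ℱ, ∀ F' ∈ ℱ, t ≤ (F ∩ F').card) :
    ℱ.card ≤ (mShadow (s - t) ℱ).card := by
  obtain rfl | ⟨F, hF⟩ := ℱ.eq_empty_or_nonempty
  · simp
  have hsized : ∀ A ∈ ℱ, #A = s := fun A hA => (mem_powersetCard.1 (hℱ hA)).2
  have hts : t ≤ s := hsized F hF ▸ IsTIntersecting.le_card hint hF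
  rw [mShadow_eq_shadow_iterate hts hsized]
  exact IsTIntersecting.card_le_card_shadow_iterate hint hℱ

/-- Katona's Intersection Shadow Theorem. -/
theorem katona_intersection_shadow (n s t : ℕ) (hts : t ≤ s) (hsn : s ≤ n)
    (ℱ : Finset (Finset ℕ)) (hℱ : ℱ ⊆ (Finset.Icc 1 n).powersetCard s)
    (hint : ∀ F ∈ ℱ, ∀ F' ∈ ℱ, t ≤ (F ∩ F').card) :
    ℱ.card ≤ (mShadow (s - t) ℱ).card :=
  katona_intersection_shadow_general n s t ℱ hℱ hint
end

section
/- Let k, r ≥ 1 be integers and let M be a k-element set. If 𝒜 is an intersecting family of r-signed k-sets all having support M (i.e., every A ∈ 𝒜 has the form {(x, a_x) : x ∈ M} with each a_x ∈ [r]), then |𝒜| ≤ r^(k−1). -/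
/-!
A signed set with support `M` is the graph of a function `M → [r]`, and reading its values in
`ZMod r` turns an intersecting family into a family of functions `M → ZMod r` any two of which
agree somewhere. Fix `x₀ ∈ M`. Two functions `f, g` with the same normalisation
`x ↦ -f x₀ + f x` differ by a constant translation, and that constant vanishes where they
agree, so the normalisation is injective on the family. The normalised functions vanish at
`x₀`, hence there are at most `r ^ (k - 1)` of them.
-/

open Finset

section AgreeingFunctions

variable {ι G : Type*} [AddGroup G]

theorem eq_of_forall_neg_add_eq_neg_add_of_eq {f g : ι → G} {i₀ j : ι}
    (hfg : ∀ i, -f i₀ + f i = -g i₀ + g i) (hj : f j = g j) : f = g := by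
  have translate : ∀ i, f i = (f i₀ + -g i₀) + g i := fun i => by
    rw [add_assoc, ← hfg i, ← add_assoc, add_neg_cancel, zero_add]
  have h₀ : f i₀ + -g i₀ = 0 := add_eq_right.mp (hj ▸ translate j).symm
  funext i
  rw [translate i, h₀, zero_add]

theorem card_le_card_pow_card_sub_one_of_forall_exists_eq [Fintype ι] [Fintype G]
    (F : Finset (ι → G)) (hF : ∀ f ∈ F, ∀ g ∈ F, ∃ i, f i = g i) :
    F.card ≤ Fintype.card G ^ (Fintype.card ι - 1) := by
  classical
  cases isEmpty_or_nonempty ι with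
  | inl hι =>
    calc F.card ≤ Fintype.card (ι → G) := card_le_univ F
      _ = Fintype.card G ^ (Fintype.card ι - 1) := by simp
  | inr hι =>
    obtain ⟨i₀⟩ := hι
    let normalise : (ι → G) → ({i // i ≠ i₀} → G) := fun f i => -f i₀ + f i
    have hinj : Set.InjOn normalise F := by
      intro f hf g hg hfg
      obtain ⟨j, hj⟩ := hF f hf g hg
      refine eq_of_forall_neg_add_eq_neg_add_of_eq (i₀ := i₀) (fun i => ?_) hj
      by_cases hi : i = i₀
      · simp [hi]
      · exact congrFun hfg ⟨i, hi⟩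
    calc F.card ≤ Fintype.card ({i // i ≠ i₀} → G) := card_le_card_of_injOn normalise
          (fun _ _ => mem_univ _) hinj
      _ = Fintype.card G ^ (Fintype.card ι - 1) := by
        rw [Fintype.card_fun, Fintype.card_subtype_compl, Fintype.card_subtype_eq]

end AgreeingFunctions

theorem ZMod.natCast_injOn_Icc (r : ℕ) : Set.InjOn (Nat.cast : ℕ → ZMod r) (Set.Icc 1 r) := by
  intro a ha b hb hab
  refine ((ZMod.natCast_eq_natCast_iff a b r).mp hab).eq_of_abs_lt ?_
  rw [abs_sub_lt_iff]
  simp only [Set.mem_Icc] at ha hb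
  omega

section SignedSets

open Classical in
/-- The sign of `x` in `A`; junk (`0`) when `x` is not in the support of `A`. -/
noncomputable def signAt (A : Finset (ℕ × ℕ)) (x : ℕ) : ℕ :=
  if h : ∃ a, (x, a) ∈ A then h.choose else 0

theorem mk_signAt_mem {A : Finset (ℕ × ℕ)} {x a : ℕ} (h : (x, a) ∈ A) :
    (x, signAt A x) ∈ A := by
  have hx : ∃ a, (x, a) ∈ A := ⟨a, h⟩
  rw [signAt, dif_pos hx]
  exact hx.choose_spec

variable {M : Finset ℕ} {A B : Finset (ℕ × ℕ)}

theorem mem_iff_signAt (hA : A.image Prod.fst = M) (hcard : A.card = M.card) {x a : ℕ} :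
    (x, a) ∈ A ↔ x ∈ M ∧ a = signAt A x := by
  have hinj : Set.InjOn Prod.fst (A : Set (ℕ × ℕ)) := card_image_iff.mp (by rw [hA, hcard])
  constructor
  · intro h
    exact ⟨hA ▸ mem_image_of_mem Prod.fst h, congrArg Prod.snd (hinj h (mk_signAt_mem h) rfl)⟩
  · rintro ⟨hx, rfl⟩
    obtain ⟨p, hp, rfl⟩ := mem_image.mp (hA ▸ hx)
    exact mk_signAt_mem hp

theorem eq_of_forall_signAt_eq (hA : A.image Prod.fst = M) (hAcard : A.card = M.card)
    (hB : B.image Prod.fst = M) (hBcard : B.card = M.card)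
    (h : ∀ x ∈ M, signAt A x = signAt B x) : A = B := by
  ext ⟨x, a⟩
  rw [mem_iff_signAt hA hAcard, mem_iff_signAt hB hBcard]
  exact and_congr_right fun hx => by rw [h x hx]

end SignedSets

theorem signed_fixed_support_general (k r : ℕ) (hr : 1 ≤ r)
    (M : Finset ℕ) (hM : M.card = k)
    (𝒜 : Finset (Finset (ℕ × ℕ)))
    (h𝒜 : ∀ A ∈ 𝒜, A.image Prod.fst = M ∧ A.card = k ∧ ∀ p ∈ A, p.2 ∈ Finset.Icc 1 r)
    (hint : ∀ A ∈ 𝒜, ∀ B ∈ 𝒜, (A ∩ B).Nonempty) :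
    𝒜.card ≤ r ^ (k - 1) := by
  have : NeZero r := ⟨by omega⟩
  have hcard : ∀ A ∈ 𝒜, A.card = M.card := fun A hA => by rw [(h𝒜 A hA).2.1, hM]
  have hgraph : ∀ A ∈ 𝒜, ∀ {x a}, (x, a) ∈ A ↔ x ∈ M ∧ a = signAt A x :=
    fun A hA => mem_iff_signAt (h𝒜 A hA).1 (hcard A hA)
  have hsign : ∀ A ∈ 𝒜, ∀ x ∈ M, signAt A x ∈ Set.Icc 1 r := fun A hA x hx => by
    simpa using (h𝒜 A hA).2.2 _ ((hgraph A hA).mpr ⟨hx, rfl⟩)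
  let φ : Finset (ℕ × ℕ) → (M → ZMod r) := fun A x => (signAt A x : ZMod r)
  have hinj : Set.InjOn φ 𝒜 := fun A hA B hB hAB =>
    eq_of_forall_signAt_eq (h𝒜 A hA).1 (hcard A hA) (h𝒜 B hB).1 (hcard B hB) fun x hx =>
      ZMod.natCast_injOn_Icc r (hsign A hA x hx) (hsign B hB x hx) (congrFun hAB ⟨x, hx⟩)
  have hagree : ∀ f ∈ 𝒜.image φ, ∀ g ∈ 𝒜.image φ, ∃ x, f x = g x := by
    simp only [mem_image]
    rintro _ ⟨A, hA, rfl⟩ _ ⟨B, hB, rfl⟩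
    obtain ⟨⟨x, a⟩, hxa⟩ := hint A hA B hB
    obtain ⟨hxaA, hxaB⟩ := mem_inter.mp hxa
    obtain ⟨hx, rfl⟩ := (hgraph A hA).mp hxaA
    obtain ⟨-, hb⟩ := (hgraph B hB).mp hxaB
    exact ⟨⟨x, hx⟩, congrArg Nat.cast hb⟩
  calc 𝒜.card = (𝒜.image φ).card := (card_image_of_injOn hinj).symm
    _ ≤ Fintype.card (ZMod r) ^ (Fintype.card M - 1) :=
      card_le_card_pow_card_sub_one_of_forall_exists_eq _ hagree
    _ = r ^ (k - 1) := by rw [ZMod.card, Fintype.card_coe, hM]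

/-- An intersecting family of `r`-signed `k`-sets, all with the same support `M`
(so each member is of the form `{(x, a_x) : x ∈ M}` with values `a_x ∈ [r]`),
has at most `r^(k-1)` members. -/
theorem signed_fixed_support (k r : ℕ) (hk : 1 ≤ k) (hr : 1 ≤ r)
    (M : Finset ℕ) (hM : M.card = k)
    (𝒜 : Finset (Finset (ℕ × ℕ)))
    (h𝒜 : ∀ A ∈ 𝒜, A.image Prod.fst = M ∧ A.card = k ∧ ∀ p ∈ A, p.2 ∈ Finset.Icc 1 r)
    (hint : ∀ A ∈ 𝒜, ∀ B ∈ 𝒜, (A ∩ B).Nonempty) :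
    𝒜.card ≤ r ^ (k - 1) :=
  signed_fixed_support_general k r hr M hM 𝒜 h𝒜 hint
end

section
/- Let n, k be integers with k ≥ 1 and 2k ≤ n. Let ℳ be an intersecting family of k-element subsets of [2, n] = {2, …, n} (a set of size n−1), and let 𝒩 = {[2, n] \ M : M ∈ ℳ} be the family of complements (each member of 𝒩 has n−1−k elements). Then |𝒩| ≤ |∂_{k−1}(𝒩)|, where ∂_{k−1}(𝒩) is the (k−1)-shadow of 𝒩. -/
open Finset

/-!
Identify the ground set with `Fin m`, `m = n - 1`; then `𝒩 = ℳᶜˢ` consists of `(m - k)`-sets and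
its `(k - 1)`-shadow is the iterated shadow `∂^[m + 1 - 2k] 𝒩`. For `m ≥ 2k`, Erdős–Ko–Rado gives
`|𝒩| = |ℳ| ≤ C(m - 1, k - 1) = C(m - 1, m - k)`. By Kruskal–Katona the iterated shadow of `𝒩` is at
least that of the colex initial segment of the same size, and a segment this small lives on the
first `m - 1` points. There the iterated local LYM inequality loses nothing, because
`C(m - 1, m - k) = C(m - 1, k - 1)`. For `m = 2k - 1` the shadow is `𝒩` itself.
-/

open scoped FinsetFamily

namespace Finset

namespace Colex

variable {α : Type*} [LinearOrder α] {𝒞 : Finset (Finset α)} {r : ℕ}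

lemma isInitSeg_powersetCard [Fintype α] (r : ℕ) :
    IsInitSeg (powersetCard r (univ : Finset α)) r :=
  ⟨Set.sized_powersetCard _ _, fun _ _ _ ht ↦ mem_powersetCard.2 ⟨subset_univ _, ht.2⟩⟩

lemma IsInitSeg.erase_of_forall_le {s : Finset α} (h : IsInitSeg 𝒞 r)
    (hs : ∀ t ∈ 𝒞, toColex t ≤ toColex s) : IsInitSeg (𝒞.erase s) r := by
  refine ⟨h.1.mono (erase_subset _ _), fun t u ht hu ↦
    mem_erase.2 ⟨?_, h.2 (mem_of_mem_erase ht) hu⟩⟩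
  rintro rfl
  exact (hs t (mem_of_mem_erase ht)).not_gt hu.1

lemma IsInitSeg.exists_isInitSeg_card_eq {N : ℕ} (h : IsInitSeg 𝒞 r) (hN : N ≤ #𝒞) :
    ∃ 𝒟 : Finset (Finset α), IsInitSeg 𝒟 r ∧ #𝒟 = N := by
  induction 𝒞 using Finset.strongInduction with
  | H 𝒞 ih =>
    obtain hN | hN := hN.eq_or_lt
    · exact ⟨𝒞, h, hN.symm⟩
    obtain ⟨s, hs, hmax⟩ := exists_max_image 𝒞 (fun s ↦ toColex s) (card_pos.1 (by omega))
    exact ih _ (erase_ssubset hs) (h.erase_of_forall_le hmax)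
      (by rw [card_erase_of_mem hs]; omega)

lemma IsInitSeg.map_castSuccEmb {c : ℕ} {𝒞 : Finset (Finset (Fin c))} (h : IsInitSeg 𝒞 r) :
    IsInitSeg (𝒞.map (mapEmbedding Fin.castSuccEmb).toEmbedding) r := by
  refine ⟨?_, fun u t hu ht ↦ ?_⟩
  · intro u hu
    obtain ⟨s, hs, rfl⟩ := mem_map.1 hu
    simpa using h.1 hs
  obtain ⟨s, hs, rfl⟩ := mem_map.1 hu
  simp only [RelEmbedding.coe_toEmbedding, mapEmbedding_apply] at ht ⊢
  have hlast : ∀ b ∈ t, b < Fin.last c :=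
    forall_lt_mono ht.1.le (by simp [Fin.castSucc_lt_last])
  obtain ⟨t, -, rfl⟩ := subset_map_iff.1 (show t ⊆ univ.map Fin.castSuccEmb by
    rw [← Fin.Iio_last_eq_map]; exact fun b hb ↦ mem_Iio.2 (hlast b hb))
  simp only [map_eq_image, Fin.coe_castSuccEmb,
    toColex_image_lt_toColex_image Fin.strictMono_castSucc,
    card_image_of_injective _ (Fin.castSucc_injective c)] at ht
  exact mem_map_of_mem _ (h.2 hs ht)

end Colex

variable {𝕜 α β : Type*} [Semifield 𝕜] [LinearOrder 𝕜] [IsStrictOrderedRing 𝕜]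

theorem card_div_choose_le_card_shadow_iterate_div_choose [Fintype α] [DecidableEq α]
    {𝒜 : Finset (Finset α)} {r i : ℕ} (hi : i ≤ r) (h𝒜 : (𝒜 : Set (Finset α)).Sized r) :
    (#𝒜 : 𝕜) / (Fintype.card α).choose r ≤
      #(∂^[i] 𝒜) / (Fintype.card α).choose (r - i) := by
  induction i with
  | zero => simp
  | succ i ih =>
    rw [Function.iterate_succ_apply', ← Nat.sub_sub]
    exact (ih (by omega)).trans <|
      card_div_choose_le_card_shadow_div_choose (by omega) h𝒜.shadow_iterate

lemma card_shadow_iterate_le_card_shadow_iterate_map [DecidableEq α] [DecidableEq β] (f : α ↪ β)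
    (𝒜 : Finset (Finset α)) (i : ℕ) :
    #(∂^[i] 𝒜) ≤ #(∂^[i] (𝒜.map (mapEmbedding f).toEmbedding)) := by
  rw [← card_map (mapEmbedding f).toEmbedding]
  refine card_le_card fun u hu ↦ ?_
  obtain ⟨t, ht, rfl⟩ := mem_map.1 hu
  obtain ⟨s, hs, hts, hcard⟩ := mem_shadow_iterate_iff_exists_sdiff.1 ht
  refine mem_shadow_iterate_iff_exists_sdiff.2 ⟨s.map f, mem_map_of_mem _ hs, ?_, ?_⟩
  · simpa using hts
  · simpa [← Finset.map_sdiff] using hcard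

lemma map_mapEmbedding_compls [Fintype α] [DecidableEq α] [DecidableEq β] (f : α ↪ β)
    (𝒜 : Finset (Finset α)) :
    𝒜ᶜˢ.map (mapEmbedding f).toEmbedding =
      (𝒜.map (mapEmbedding f).toEmbedding).image (univ.map f \ ·) := by
  rw [compls, map_map, map_eq_image _ 𝒜, map_eq_image _ 𝒜, image_image]
  refine image_congr fun s _ ↦ ?_
  change sᶜ.map f = univ.map f \ s.map f
  rw [compl_eq_univ_sdiff, Finset.map_sdiff]

theorem card_div_choose_le_card_shadow_iterate_div_choose_of_card_le {c r i : ℕ}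
    {𝒜 : Finset (Finset (Fin (c + 1)))} (hi : i ≤ r)
    (h𝒜 : (𝒜 : Set (Finset (Fin (c + 1)))).Sized r) (hcard : #𝒜 ≤ c.choose r) :
    (#𝒜 : 𝕜) / c.choose r ≤ #(∂^[i] 𝒜) / c.choose (r - i) := by
  obtain ⟨𝒞, h𝒞, h𝒞card⟩ :=
    (Colex.isInitSeg_powersetCard (α := Fin c) r).exists_isInitSeg_card_eq (N := #𝒜)
      (by simpa using hcard)
  have hlym := card_div_choose_le_card_shadow_iterate_div_choose (𝕜 := 𝕜) hi h𝒞.1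
  rw [Fintype.card_fin, h𝒞card] at hlym
  have hkk : #(∂^[i] 𝒞) ≤ #(∂^[i] 𝒜) :=
    (card_shadow_iterate_le_card_shadow_iterate_map Fin.castSuccEmb 𝒞 i).trans <|
      iterated_kk h𝒜 (by rw [card_map, h𝒞card]) h𝒞.map_castSuccEmb
  exact hlym.trans (by gcongr)

theorem _root_.Set.Intersecting.card_le_card_shadow_iterate_compls {m k : ℕ}
    {𝒜 : Finset (Finset (Fin m))} (h𝒜 : (𝒜 : Set (Finset (Fin m))).Intersecting)
    (h𝒜k : (𝒜 : Set (Finset (Fin m))).Sized k) (hk : 1 ≤ k) (hkm : 2 * k ≤ m + 1) :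
    #𝒜 ≤ #(∂^[m + 1 - 2 * k] 𝒜ᶜˢ) := by
  obtain hkm | hkm := hkm.eq_or_lt
  · simp [show m + 1 - 2 * k = 0 by omega]
  obtain ⟨c, rfl⟩ : ∃ c, m = c + 1 := ⟨m - 1, by omega⟩
  have hchoose : c.choose (c + 1 - k) = c.choose (k - 1) := Nat.choose_symm_of_eq_add (by omega)
  have hekr : #𝒜 ≤ c.choose (k - 1) := by simpa using erdos_ko_rado h𝒜 h𝒜k (by omega)
  have hlym := card_div_choose_le_card_shadow_iterate_div_choose_of_card_le (𝕜 := ℚ)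
    (𝒜 := 𝒜ᶜˢ) (r := c + 1 - k) (i := c + 1 + 1 - 2 * k) (by omega)
    (by simpa using h𝒜k.compls) (by rwa [card_compls, hchoose])
  rw [show c + 1 - k - (c + 1 + 1 - 2 * k) = k - 1 by omega, hchoose, card_compls,
    div_le_div_iff_of_pos_right (by exact_mod_cast Nat.choose_pos (by omega))] at hlym
  exact_mod_cast hlym

end Finset

lemma shadow_iterate_subset_mShadow {𝒩 : Finset (Finset ℕ)} {r : ℕ}
    (h𝒩 : (𝒩 : Set (Finset ℕ)).Sized r) (i : ℕ) : ∂^[i] 𝒩 ⊆ mShadow (r - i) 𝒩 := by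
  intro t ht
  obtain ⟨s, hs, hts, hcard⟩ := mem_shadow_iterate_iff_exists_sdiff.1 ht
  have ht : #t = r - i := by
    have := card_sdiff_of_subset hts
    have := card_le_card hts
    have := h𝒩 hs
    omega
  exact mem_sup.2 ⟨s, hs, mem_powersetCard.2 ⟨hts, ht⟩⟩

theorem card_image_sdiff_le_card_mShadow {X : Finset ℕ} {k : ℕ} {ℳ : Finset (Finset ℕ)}
    (hℳ : ℳ ⊆ X.powersetCard k) (hint : (ℳ : Set (Finset ℕ)).Intersecting) (hk : 1 ≤ k)
    (hkX : 2 * k ≤ #X + 1) :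
    #(ℳ.image (X \ ·)) ≤ #(mShadow (k - 1) (ℳ.image (X \ ·))) := by
  have hsized : (ℳ.image (X \ ·) : Set (Finset ℕ)).Sized (#X - k) := by
    intro N hN
    obtain ⟨M, hM, rfl⟩ := mem_image.1 (mem_coe.1 hN)
    obtain ⟨hMX, hMk⟩ := mem_powersetCard.1 (hℳ hM)
    rw [card_sdiff_of_subset hMX, hMk]
  set e := (X.orderEmbOfFin rfl).toEmbedding
  set φ := (mapEmbedding e).toEmbedding
  obtain ⟨ℳ', hℳ'k, rfl⟩ : ∃ ℳ' ⊆ powersetCard k univ, ℳ = ℳ'.map φ := by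
    rwa [← subset_map_iff, ← powersetCard_map, map_orderEmbOfFin_univ]
  have himage : (ℳ'.map φ).image (X \ ·) = ℳ'ᶜˢ.map φ := by
    rw [map_mapEmbedding_compls, map_orderEmbOfFin_univ]
  rw [himage] at hsized
  have hint' : (ℳ' : Set (Finset (Fin #X))).Intersecting := fun M hM M' hM' hdisj ↦
    hint (mem_map_of_mem φ hM) (mem_map_of_mem φ hM') ((disjoint_map _).2 hdisj)
  rw [himage, card_map, card_compls]
  calc #ℳ' ≤ #(∂^[#X + 1 - 2 * k] ℳ'ᶜˢ) :=
        hint'.card_le_card_shadow_iterate_compls ((Set.sized_powersetCard _ _).mono hℳ'k) hk hkX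
    _ ≤ #(∂^[#X + 1 - 2 * k] (ℳ'ᶜˢ.map φ)) :=
        card_shadow_iterate_le_card_shadow_iterate_map _ _ _
    _ ≤ #(mShadow (k - 1) (ℳ'ᶜˢ.map φ)) := by
      rw [show k - 1 = #X - k - (#X + 1 - 2 * k) by omega]
      exact card_le_card (shadow_iterate_subset_mShadow hsized _)

theorem complements_shadow_bound (n k : ℕ) (hk : 1 ≤ k) (hkn : 2 * k ≤ n)
    (ℳ : Finset (Finset ℕ)) (hℳ : ℳ ⊆ (Finset.Icc 2 n).powersetCard k)
    (hint : ∀ M ∈ ℳ, ∀ M' ∈ ℳ, (M ∩ M').Nonempty) :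
    (ℳ.image (fun M => Finset.Icc 2 n \ M)).card ≤
      (mShadow (k - 1) (ℳ.image (fun M => Finset.Icc 2 n \ M))).card := by
  have hX : #(Icc 2 n) = n - 1 := by rw [Nat.card_Icc]; omega
  exact card_image_sdiff_le_card_mShadow hℳ
    (fun M hM M' hM' ↦ not_disjoint_iff_nonempty_inter.2 (hint M hM M' hM')) hk (by omega)
end

section
/- Let n, k, r be integers with r ≥ 2 and 1 ≤ k ≤ n, and let 𝒜 ⊆ 𝒮_{n,k,r} be an intersecting family. For each i ∈ [r], let 𝒜′_i = {A \ {(1, i)} : A ∈ 𝒜, (1, i) ∈ A}. Then the r families 𝒜′_1, θ^1_r(𝒜′_2), θ^2_r(𝒜′_3), …, θ^{r−1}_r(𝒜′_r) are pairwise disjoint. -/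
open Finset

/-- `mod*`: the modulo operation with representatives in `{1, …, r}`,
so multiples of `r` map to `r` instead of `0`. -/
def modStar (x : ℤ) (r : ℕ) : ℕ :=
  if (r : ℤ) ∣ x then r else (x % (r : ℤ)).toNat

/-- The shift `θ^q_r(A) = {(x, (a + q) mod* r) : (x, a) ∈ A}`. -/
def theta (q : ℤ) (r : ℕ) (A : Finset (ℕ × ℕ)) : Finset (ℕ × ℕ) :=
  A.image (fun p => (p.1, modStar ((p.2 : ℤ) + q) r))

/-- `𝒜′_i = {A \ {(1, i)} : A ∈ 𝒜, (1, i) ∈ A}`. -/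
def primeFam (𝒜 : Finset (Finset (ℕ × ℕ))) (i : ℕ) : Finset (Finset (ℕ × ℕ)) :=
  (𝒜.filter (fun A => (1, i) ∈ A)).image (fun A => A.erase (1, i))

/-- The `i`-th family in the list `𝒜′_1, θ^1_r(𝒜′_2), …, θ^{r−1}_r(𝒜′_r)`:
`𝒜′_1` itself for `i = 1`, and `θ^{i−1}_r(𝒜′_i)` for `i ≥ 2`. -/
def shiftedFam (𝒜 : Finset (Finset (ℕ × ℕ))) (r i : ℕ) : Finset (Finset (ℕ × ℕ)) :=
  if i = 1 then primeFam 𝒜 1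
  else (primeFam 𝒜 i).image (fun A => theta ((i : ℤ) - 1) r A)

/-!
If `C` lay in both `θ^{i-1}(A ∖ {(1,i)})` and `θ^{j-1}(B ∖ {(1,j)})`, take a common element
`(x, a)` of the intersecting pair `A, B`. Since signed sets have distinct first coordinates and
`i ≠ j`, we have `x ≠ 1`, so `(x, a)` survives both erasures. A shift keeps first coordinates,
so `C` contains exactly one pair with first coordinate `x`, which forces
`a + i - 1 ≡ a + j - 1 (mod r)`, impossible for distinct `i, j ∈ [r]`.
-/

lemma modStar_modEq {r : ℕ} (hr : 0 < r) (x : ℤ) : (modStar x r : ℤ) ≡ x [ZMOD r] := by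
  unfold modStar
  split_ifs with h
  · exact Int.modEq_iff_dvd.mpr (dvd_sub h dvd_rfl)
  · rw [Int.toNat_of_nonneg (Int.emod_nonneg x (by omega))]
    exact Int.mod_modEq x r

lemma modStar_natCast_of_mem_Icc {r a : ℕ} (ha : a ∈ Icc 1 r) : modStar (a : ℤ) r = a := by
  rw [mem_Icc] at ha
  unfold modStar
  split_ifs with h
  · exact le_antisymm (Nat.le_of_dvd (by omega) (Int.natCast_dvd_natCast.mp h)) ha.2
  · have hne : a ≠ r := by rintro rfl; exact h dvd_rfl
    rw [Int.emod_eq_of_lt (by omega) (by omega), Int.toNat_natCast]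

lemma theta_zero_of_snd_mem_Icc {r : ℕ} {A : Finset (ℕ × ℕ)} (hA : ∀ p ∈ A, p.2 ∈ Icc 1 r) :
    theta 0 r A = A := by
  unfold theta
  rw [image_congr (g := id) fun p hp => ?_, image_id]
  simp [modStar_natCast_of_mem_Icc (hA p hp)]

lemma modEq_of_theta_eq {r : ℕ} (hr : 0 < r) {p q : ℤ} {A B : Finset (ℕ × ℕ)}
    (hA : Set.InjOn Prod.fst (A : Set (ℕ × ℕ))) {x a : ℕ} (hxA : (x, a) ∈ A) (hxB : (x, a) ∈ B)
    (h : theta p r A = theta q r B) : p ≡ q [ZMOD r] := by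
  have hmem : (x, modStar (a + q) r) ∈ theta p r A := h ▸ mem_image_of_mem _ hxB
  obtain ⟨⟨y, b⟩, hyA, hyx⟩ := mem_image.mp hmem
  simp only [Prod.mk.injEq] at hyx
  obtain ⟨rfl, hb⟩ := hyx
  have hba : b = a := congrArg Prod.snd (hA hyA hxA rfl)
  rw [hba] at hb
  have hmod : (a : ℤ) + p ≡ a + q [ZMOD r] := calc
    (a : ℤ) + p ≡ modStar (a + p) r [ZMOD r] := (modStar_modEq hr _).symm
    _ = modStar (a + q) r := by rw [hb]
    _ ≡ a + q [ZMOD r] := modStar_modEq hr _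
  exact Int.ModEq.add_left_cancel' _ hmod

lemma snd_mem_Icc_of_mem_signedSets {n k r : ℕ} {A : Finset (ℕ × ℕ)}
    (hA : A ∈ signedSets n k r) : ∀ p ∈ A, p.2 ∈ Icc 1 r := fun p hp => by
  simp only [signedSets, mem_filter, mem_powerset] at hA
  exact (mem_product.mp (hA.1 hp)).2

lemma injOn_fst_of_mem_signedSets {n k r : ℕ} {A : Finset (ℕ × ℕ)}
    (hA : A ∈ signedSets n k r) : Set.InjOn Prod.fst (A : Set (ℕ × ℕ)) := by
  simp only [signedSets, mem_filter] at hA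
  exact card_image_iff.mp (hA.2.2.trans hA.2.1.symm)

lemma shiftedFam_eq_image {r : ℕ} {𝒜 : Finset (Finset (ℕ × ℕ))}
    (h𝒜 : ∀ A ∈ 𝒜, ∀ p ∈ A, p.2 ∈ Icc 1 r) (i : ℕ) :
    shiftedFam 𝒜 r i = (primeFam 𝒜 i).image (theta ((i : ℤ) - 1) r) := by
  unfold shiftedFam
  split_ifs with hi
  · subst hi
    rw [Nat.cast_one, sub_self, image_congr (g := id) fun C hC => ?_, image_id]
    simp only [primeFam, mem_coe, mem_image, mem_filter] at hC
    obtain ⟨A, ⟨hA, -⟩, rfl⟩ := hC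
    exact theta_zero_of_snd_mem_Icc fun p hp => h𝒜 A hA p (mem_of_mem_erase hp)
  · rfl

lemma mem_shiftedFam {r i : ℕ} {𝒜 : Finset (Finset (ℕ × ℕ))}
    (h𝒜 : ∀ A ∈ 𝒜, ∀ p ∈ A, p.2 ∈ Icc 1 r) {C : Finset (ℕ × ℕ)} :
    C ∈ shiftedFam 𝒜 r i ↔
      ∃ A ∈ 𝒜, (1, i) ∈ A ∧ theta ((i : ℤ) - 1) r (A.erase (1, i)) = C := by
  simp [shiftedFam_eq_image h𝒜, primeFam, and_assoc]

theorem shifted_families_pairwise_disjoint_general (n k r : ℕ)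
    (𝒜 : Finset (Finset (ℕ × ℕ))) (h𝒜 : 𝒜 ⊆ signedSets n k r)
    (hint : ∀ A ∈ 𝒜, ∀ B ∈ 𝒜, (A ∩ B).Nonempty) :
    ∀ i ∈ Finset.Icc 1 r, ∀ j ∈ Finset.Icc 1 r, i ≠ j →
      shiftedFam 𝒜 r i ∩ shiftedFam 𝒜 r j = ∅ := by
  intro i hi j hj hij
  rw [mem_Icc] at hi hj
  have hsnd A (hA : A ∈ 𝒜) := snd_mem_Icc_of_mem_signedSets (h𝒜 hA)
  rw [eq_empty_iff_forall_notMem]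
  intro C hC
  rw [mem_inter, mem_shiftedFam hsnd, mem_shiftedFam hsnd] at hC
  obtain ⟨⟨A, hA, hAi, rfl⟩, ⟨B, hB, hBj, hBA⟩⟩ := hC
  have hAinj := injOn_fst_of_mem_signedSets (h𝒜 hA)
  obtain ⟨⟨x, a⟩, hxa⟩ := hint A hA B hB
  rw [mem_inter] at hxa
  have hx : x ≠ 1 := by
    rintro rfl
    have hai : a = i := congrArg Prod.snd (hAinj hxa.1 hAi rfl)
    have haj : a = j := congrArg Prod.snd (injOn_fst_of_mem_signedSets (h𝒜 hB) hxa.2 hBj rfl)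
    exact hij (hai ▸ haj)
  have hmod : (i : ℤ) - 1 ≡ (j : ℤ) - 1 [ZMOD r] :=
    modEq_of_theta_eq (by omega) (hAinj.mono (erase_subset _ _))
      (mem_erase.mpr ⟨by simp [hx], hxa.1⟩) (mem_erase.mpr ⟨by simp [hx], hxa.2⟩) hBA.symm
  have hzero := Int.eq_zero_of_abs_lt_dvd hmod.dvd (by rw [abs_lt]; omega)
  omega

theorem shifted_families_pairwise_disjoint (n k r : ℕ) (hr : 2 ≤ r) (hk : 1 ≤ k) (hkn : k ≤ n)
    (𝒜 : Finset (Finset (ℕ × ℕ))) (h𝒜 : 𝒜 ⊆ signedSets n k r)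
    (hint : ∀ A ∈ 𝒜, ∀ B ∈ 𝒜, (A ∩ B).Nonempty) :
    ∀ i ∈ Finset.Icc 1 r, ∀ j ∈ Finset.Icc 1 r, i ≠ j →
      shiftedFam 𝒜 r i ∩ shiftedFam 𝒜 r j = ∅ :=
  shifted_families_pairwise_disjoint_general n k r 𝒜 h𝒜 hint
end
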